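/- Define ψ(r) = (1/r)·(Σ_{j≥1} 2^{-j} e^{-1/(2^j r)} − e^{-1/r}) for r > 0. Then ψ(r) is finite and strictly positive for every r > 0, and r² ψ(r) → 2/3 as r → +∞. -/
import Mathlib


open Filter

/-- The profile `ψ(r) = (1/r)·(Σ_{j≥1} 2^{-j} e^{-1/(2^j r)} - e^{-1/r})`. -/
noncomputable def psiFn (r : ℝ) : ℝ :=
  (1 / r) * ((∑' j : ℕ, (2:ℝ) ^ (-(j : ℤ) - 1) * Real.exp (-((2:ℝ) ^ ((j : ℤ) + 1) * r)⁻¹)) -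
    Real.exp (-r⁻¹))

namespace PsiAux

noncomputable def c (j : ℕ) : ℝ := (2:ℝ) ^ (-(j : ℤ) - 1)

lemma c_eq (j : ℕ) : c j = (1/2 : ℝ) ^ j * (1/2) := by
  unfold c
  rw [show -(j:ℤ) - 1 = -(((j+1 : ℕ) : ℤ)) by push_cast; ring, zpow_neg, zpow_natCast,
    ← inv_pow, pow_succ]
  norm_num

lemma c_pos (j : ℕ) : 0 < c j := by
  rw [c_eq]; positivity

lemma c_le_one (j : ℕ) : c j ≤ 1 := by
  rw [c_eq]
  have h : (1/2:ℝ)^j ≤ 1 := pow_le_one₀ (by norm_num) (by norm_num)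
  nlinarith

lemma csq_eq (j : ℕ) : c j * c j = (1/4 : ℝ) ^ j * (1/4) := by
  rw [c_eq, show (1/4:ℝ) = (1/2)*(1/2) by norm_num, mul_pow]; ring

lemma summable_c : Summable c := by
  have : c = fun j : ℕ => (1/2 : ℝ) ^ j * (1/2) := funext c_eq
  rw [this]
  exact (summable_geometric_of_lt_one (by norm_num) (by norm_num)).mul_right _

lemma tsum_c : ∑' j, c j = 1 := by
  simp only [c_eq]
  rw [tsum_mul_right, tsum_geometric_of_lt_one (by norm_num) (by norm_num)]
  norm_num

lemma summable_csq : Summable (fun j => c j * c j) := by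
  have : (fun j => c j * c j) = fun j : ℕ => (1/4 : ℝ) ^ j * (1/4) := funext csq_eq
  rw [this]
  exact (summable_geometric_of_lt_one (by norm_num) (by norm_num)).mul_right _

lemma tsum_csq : ∑' j, c j * c j = 1/3 := by
  simp only [csq_eq]
  rw [tsum_mul_right, tsum_geometric_of_lt_one (by norm_num) (by norm_num)]
  norm_num

lemma exp_upper {a b : ℝ} (ha : 0 ≤ a) (hab : a ≤ b) :
    Real.exp (-a) - Real.exp (-b) ≤ b - a := by
  have h1 : Real.exp (-a) ≤ 1 := Real.exp_le_one_iff.mpr (by linarith)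
  have h2 : (a - b) + 1 ≤ Real.exp (a - b) := Real.add_one_le_exp _
  have h3 : Real.exp (-a) * Real.exp (a - b) = Real.exp (-b) := by
    rw [← Real.exp_add]; ring_nf
  nlinarith [Real.exp_pos (-a), mul_le_mul_of_nonneg_left h2 (Real.exp_pos (-a)).le]

lemma exp_quad {b : ℝ} (hb : 0 ≤ b) : Real.exp (-b) ≤ 1 - b + b^2 := by
  have h1 : (b:ℝ) + 1 ≤ Real.exp b := Real.add_one_le_exp b
  have h2 : Real.exp (-b) * Real.exp b = 1 := by
    rw [← Real.exp_add]; simp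
  have h3 : (0:ℝ) ≤ 1 - b + b^2 := by nlinarith
  nlinarith [Real.exp_pos b, Real.exp_pos (-b), mul_le_mul_of_nonneg_left h1 h3]

lemma exp_lower {a b : ℝ} (ha : 0 ≤ a) (hab : a ≤ b) :
    b - a - b^2 ≤ Real.exp (-a) - Real.exp (-b) := by
  have h1 : 1 - a ≤ Real.exp (-a) := by
    have := Real.add_one_le_exp (-a); linarith
  have h2 : Real.exp (-b) ≤ 1 - b + b^2 := exp_quad (le_trans ha hab)
  linarith

lemma term_eq (r : ℝ) (j : ℕ) :
    (2:ℝ) ^ (-(j : ℤ) - 1) * Real.exp (-((2:ℝ) ^ ((j : ℤ) + 1) * r)⁻¹) =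
      c j * Real.exp (-(c j * r⁻¹)) := by
  unfold c
  congr 2
  rw [mul_inv, ← zpow_neg, show -((j:ℤ)+1) = -(j:ℤ) - 1 from by ring]

lemma summable_main' (r : ℝ) (hr : 0 < r) :
    Summable (fun j => c j * Real.exp (-(c j * r⁻¹))) := by
  apply Summable.of_nonneg_of_le (fun j => mul_nonneg (c_pos j).le (Real.exp_pos _).le)
    (fun j => ?_) summable_c
  have hx : 0 ≤ r⁻¹ := by positivity
  have h : Real.exp (-(c j * r⁻¹)) ≤ 1 :=
    Real.exp_le_one_iff.mpr (by nlinarith [c_pos j])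
  nlinarith [c_pos j]

lemma summable_diff (r : ℝ) (hr : 0 < r) :
    Summable (fun j => c j * (Real.exp (-(c j * r⁻¹)) - Real.exp (-r⁻¹))) := by
  have h1 := summable_main' r hr
  have h2 : Summable (fun j => c j * Real.exp (-r⁻¹)) := summable_c.mul_right _
  simpa [mul_sub] using h1.sub h2

lemma decomp (r : ℝ) (hr : 0 < r) :
    psiFn r = r⁻¹ * ∑' j, c j * (Real.exp (-(c j * r⁻¹)) - Real.exp (-r⁻¹)) := by
  unfold psiFn
  rw [one_div, tsum_congr (term_eq r)]
  congr 1
  have h1 := summable_main' r hr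
  have h2 : Summable (fun j => c j * Real.exp (-r⁻¹)) := summable_c.mul_right _
  have : ∑' j, c j * (Real.exp (-(c j * r⁻¹)) - Real.exp (-r⁻¹))
      = (∑' j, c j * Real.exp (-(c j * r⁻¹))) - ∑' j, c j * Real.exp (-r⁻¹) := by
    rw [← Summable.tsum_sub h1 h2]
    exact tsum_congr fun j => by ring
  rw [this, tsum_mul_right, tsum_c, one_mul]

lemma tsum_upper (r : ℝ) (hr : 0 < r) :
    ∑' j, c j * (Real.exp (-(c j * r⁻¹)) - Real.exp (-r⁻¹)) ≤ 2/3 * r⁻¹ := by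
  have hx : 0 < r⁻¹ := inv_pos.mpr hr
  have hle : ∀ j, c j * (Real.exp (-(c j * r⁻¹)) - Real.exp (-r⁻¹))
      ≤ (c j - c j * c j) * r⁻¹ := by
    intro j
    have h := exp_upper (a := c j * r⁻¹) (b := r⁻¹) (mul_nonneg (c_pos j).le hx.le)
      (by nlinarith [c_le_one j, c_pos j])
    nlinarith [c_pos j]
  have hs2 : Summable (fun j => (c j - c j * c j) * r⁻¹) :=
    (summable_c.sub summable_csq).mul_right _
  calc ∑' j, c j * (Real.exp (-(c j * r⁻¹)) - Real.exp (-r⁻¹))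
      ≤ ∑' j, (c j - c j * c j) * r⁻¹ := Summable.tsum_le_tsum hle (summable_diff r hr) hs2
    _ = 2/3 * r⁻¹ := by
        rw [tsum_mul_right, Summable.tsum_sub summable_c summable_csq, tsum_c, tsum_csq]; norm_num

lemma tsum_lower (r : ℝ) (hr : 0 < r) :
    2/3 * r⁻¹ - r⁻¹^2 ≤ ∑' j, c j * (Real.exp (-(c j * r⁻¹)) - Real.exp (-r⁻¹)) := by
  have hx : 0 < r⁻¹ := inv_pos.mpr hr
  have hle : ∀ j, (c j - c j * c j) * r⁻¹ - c j * r⁻¹^2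
      ≤ c j * (Real.exp (-(c j * r⁻¹)) - Real.exp (-r⁻¹)) := by
    intro j
    have h := exp_lower (a := c j * r⁻¹) (b := r⁻¹) (mul_nonneg (c_pos j).le hx.le)
      (by nlinarith [c_le_one j, c_pos j])
    nlinarith [c_pos j]
  have hs1 : Summable (fun j => (c j - c j * c j) * r⁻¹ - c j * r⁻¹^2) :=
    ((summable_c.sub summable_csq).mul_right _).sub (summable_c.mul_right _)
  calc (2:ℝ)/3 * r⁻¹ - r⁻¹^2
      = ∑' j, ((c j - c j * c j) * r⁻¹ - c j * r⁻¹^2) := by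
        rw [Summable.tsum_sub ((summable_c.sub summable_csq).mul_right _) (summable_c.mul_right _),
          tsum_mul_right, tsum_mul_right, Summable.tsum_sub summable_c summable_csq, tsum_c, tsum_csq]
        norm_num
    _ ≤ _ := Summable.tsum_le_tsum hle hs1 (summable_diff r hr)

end PsiAux

open PsiAux in
/-- Lemma 7: `ψ` is well defined (the series converges) and strictly positive on `(0,∞)`,
and `r² ψ(r) → 2/3` as `r → +∞`. -/
theorem psiFn_pos_and_limit :
    (∀ r : ℝ, 0 < r →
      Summable (fun j : ℕ => (2:ℝ) ^ (-(j : ℤ) - 1) * Real.exp (-((2:ℝ) ^ ((j : ℤ) + 1) * r)⁻¹))) ∧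
    (∀ r : ℝ, 0 < r → 0 < psiFn r) ∧
    Tendsto (fun r : ℝ => r ^ 2 * psiFn r) atTop (nhds (2 / 3)) := by
  refine ⟨?_, ?_, ?_⟩
  · intro r hr
    have := summable_main' r hr
    rwa [show (fun j : ℕ => c j * Real.exp (-(c j * r⁻¹)))
        = fun j : ℕ => (2:ℝ) ^ (-(j : ℤ) - 1) * Real.exp (-((2:ℝ) ^ ((j : ℤ) + 1) * r)⁻¹)
      from funext fun j => (term_eq r j).symm] at this
  · intro r hr
    rw [decomp r hr]
    have hx : 0 < r⁻¹ := inv_pos.mpr hr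
    have hpos : 0 < ∑' j, c j * (Real.exp (-(c j * r⁻¹)) - Real.exp (-r⁻¹)) := by
      refine Summable.tsum_pos (summable_diff r hr) (fun j => ?_) 0 ?_
      · have : Real.exp (-r⁻¹) ≤ Real.exp (-(c j * r⁻¹)) :=
          Real.exp_le_exp.mpr (by nlinarith [c_le_one j, c_pos j])
        nlinarith [c_pos j]
      · have hc0 : c 0 = 1/2 := by rw [c_eq]; norm_num
        have : Real.exp (-r⁻¹) < Real.exp (-(c 0 * r⁻¹)) :=
          Real.exp_lt_exp.mpr (by rw [hc0]; nlinarith)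
        nlinarith [c_pos 0]
    exact mul_pos hx hpos
  · have hub : ∀ r : ℝ, 0 < r → r ^ 2 * psiFn r ≤ 2/3 := by
      intro r hr
      rw [decomp r hr]
      have h := tsum_upper r hr
      have hr' : r ≠ 0 := hr.ne'
      have : r ^ 2 * (r⁻¹ * ∑' j, c j * (Real.exp (-(c j * r⁻¹)) - Real.exp (-r⁻¹)))
          = r * ∑' j, c j * (Real.exp (-(c j * r⁻¹)) - Real.exp (-r⁻¹)) := by
        field_simp
      rw [this]
      calc r * ∑' j, c j * (Real.exp (-(c j * r⁻¹)) - Real.exp (-r⁻¹))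
          ≤ r * (2/3 * r⁻¹) := mul_le_mul_of_nonneg_left h hr.le
        _ = 2/3 := by field_simp
    have hlb : ∀ r : ℝ, 0 < r → 2/3 - r⁻¹ ≤ r ^ 2 * psiFn r := by
      intro r hr
      rw [decomp r hr]
      have h := tsum_lower r hr
      have hr' : r ≠ 0 := hr.ne'
      have heq : r ^ 2 * (r⁻¹ * ∑' j, c j * (Real.exp (-(c j * r⁻¹)) - Real.exp (-r⁻¹)))
          = r * ∑' j, c j * (Real.exp (-(c j * r⁻¹)) - Real.exp (-r⁻¹)) := by
        field_simp
      rw [heq]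
      calc (2:ℝ)/3 - r⁻¹ = r * (2/3 * r⁻¹ - r⁻¹^2) := by field_simp
        _ ≤ r * ∑' j, c j * (Real.exp (-(c j * r⁻¹)) - Real.exp (-r⁻¹)) :=
            mul_le_mul_of_nonneg_left h hr.le
    have h1 : Tendsto (fun r : ℝ => 2/3 - r⁻¹) atTop (nhds (2/3)) := by
      simpa using (tendsto_const_nhds (α := ℝ) (x := (2:ℝ)/3)).sub tendsto_inv_atTop_zero
    refine tendsto_of_tendsto_of_tendsto_of_le_of_le' h1 tendsto_const_nhds ?_ ?_
    · filter_upwards [eventually_gt_atTop 0] with r hr using hlb r hr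
    · filter_upwards [eventually_gt_atTop 0] with r hr using hub r hr
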